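/- Addition theorem for inductive posets: let P be a locally geometric poset with at least one atom, let a ∈ A(P), and set P' = P(A(P)∖{a}), P'' = P_{≥a}. (a) If rk(P) = rk(P') (a is not a separator), P'' ∈ IP with exp(P'') = {d_1, …, d_{ℓ−1}}, and P' ∈ IP with exp(P') = {d_1, …, d_{ℓ−1}, d_ℓ}, then P ∈ IP with exp(P) = {d_1, …, d_{ℓ−1}, d_ℓ + 1}. (b) If rk(P) = rk(P') + 1 (a is a separator), P'' ∈ IP and P' ∈ IP with exp(P'') = exp(P') = {d_1, …, d_{ℓ−1}}, then P ∈ IP with exp(P) = {1, d_1, …, d_{ℓ−1}}. -/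

import Mathlib

open scoped Classical
open Polynomial

noncomputable section

namespace PosetArr

/-- The rank of an element of a poset: the length of the longest chain
strictly below it. In a ranked poset this is the common length of all maximal
chains with greatest element `x`. -/
noncomputable def rk {α : Type*} [Preorder α] (x : α) : ℕ :=
  (Set.chainHeight (Set.Iio x) (· < ·)).toNat

/-- The rank of a (finite) poset: the maximal rank of an element. -/
noncomputable def prk (α : Type*) [Preorder α] [Fintype α] : ℕ :=
  Finset.univ.sup (rk (α := α))

/-- A finite poset is ranked iff covering relations increase `rk` by one;
equivalently, for every `x` all maximal chains with greatest element `x`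
have the same length. -/
def IsRanked (α : Type*) [Preorder α] : Prop :=
  ∀ x y : α, x ⋖ y → rk y = rk x + 1

/-- The set of atoms (elements of rank 1) of a poset. -/
def atoms (α : Type*) [Preorder α] : Set α := {x : α | rk x = 1}

/-- `joinSet T` is the join `⋁ T`: the set of minimal upper bounds of `T`. -/
def joinSet {α : Type*} [PartialOrder α] (T : Set α) : Set α :=
  {z | z ∈ upperBounds T ∧ ∀ w ∈ upperBounds T, w ≤ z → w = z}

/-- `meetSet T` is the meet `⋀ T`: the set of maximal lower bounds of `T`. -/
def meetSet {α : Type*} [PartialOrder α] (T : Set α) : Set α :=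
  {z | z ∈ lowerBounds T ∧ ∀ w ∈ lowerBounds T, z ≤ w → w = z}

/-- A poset is a lattice if any two elements have a unique minimal upper
bound and a unique maximal lower bound. -/
def IsLatticePoset (α : Type*) [PartialOrder α] : Prop :=
  ∀ x y : α, (∃! z, z ∈ joinSet {x, y}) ∧ (∃! z, z ∈ meetSet {x, y})

/-- A (finite) lattice is geometric if for all `x, y`: `y` covers `x` iff
there is an atom `a` with `a ≰ x` and `y = x ∨ a`. -/
def IsGeomLattice (α : Type*) [PartialOrder α] : Prop :=
  IsLatticePoset α ∧
    ∀ x y : α, x ⋖ y ↔ ∃ a : α, a ∈ atoms α ∧ ¬a ≤ x ∧ y ∈ joinSet {x, a}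

/-- A finite ranked poset is locally geometric if every lower interval
`P_{≤ x}` is a geometric lattice. -/
def IsLocallyGeometric (α : Type*) [PartialOrder α] : Prop :=
  IsRanked α ∧ ∀ x : α, IsGeomLattice {y : α // y ≤ x}

/-- The Möbius function of a finite poset. -/
noncomputable def mob {α : Type*} [PartialOrder α] [Fintype α] (a b : α) : ℤ :=
  if a = b then 1
  else if a < b then
    - ∑ c ∈ (Finset.univ.filter (fun c : α => a ≤ c ∧ c < b)).attach, mob a c.1
  else 0
termination_by (Finset.univ.filter (fun c : α => c ≤ b)).card
decreasing_by
  have hc := c.2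
  simp only [Finset.mem_filter, Finset.mem_univ, true_and] at hc
  apply Finset.card_lt_card
  constructor
  · intro z hz
    simp only [Finset.mem_filter, Finset.mem_univ, true_and] at hz ⊢
    exact hz.trans hc.2.le
  · intro hsub
    have hb : b ∈ Finset.univ.filter (fun z : α => z ≤ b) := by
      simp
    have := hsub hb
    simp only [Finset.mem_filter, Finset.mem_univ, true_and] at this
    exact absurd (lt_of_le_of_lt this hc.2) (lt_irrefl _)

/-- The characteristic polynomial of a finite ranked poset with `0̂`:
`χ_P(t) = ∑_x μ(0̂,x) t^(rk(P) - rk(x))`. -/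
noncomputable def charPoly (α : Type*) [PartialOrder α] [Fintype α] [OrderBot α] :
    Polynomial ℤ :=
  ∑ x : α, Polynomial.C (mob ⊥ x) * Polynomial.X ^ (prk α - rk x)

/-- The subposet of `P` generated by a set `B` of atoms: the minimal element
together with all joins of subsets of `B`. -/
def genSub {α : Type*} [PartialOrder α] [OrderBot α] (B : Set α) : Set α :=
  insert ⊥ {z | ∃ T ⊆ B, z ∈ joinSet T}

instance upperOrderBot {α : Type*} [PartialOrder α] (a : α) :
    OrderBot {y : α // a ≤ y} where
  bot := ⟨a, le_rfl⟩
  bot_le y := y.2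

instance genSubOrderBot {α : Type*} [PartialOrder α] [OrderBot α] (B : Set α) :
    OrderBot {y : α // y ∈ genSub B} where
  bot := ⟨⊥, Set.mem_insert _ _⟩
  bot_le y := bot_le

/-- `OrderBot` structure on a down-set containing `⊥`. -/
def subsetOrderBot {α : Type*} [PartialOrder α] [OrderBot α] {Q : Set α}
    (h : ⊥ ∈ Q) : OrderBot {y : α // y ∈ Q} where
  bot := ⟨⊥, h⟩
  bot_le y := bot_le

/-- The class of inductive posets: the smallest class of locally geometric
posets containing the one-element poset and closed under the addition step:
`P ∈ IP` whenever there is an atom `a` such that `P'' = P_{≥a} ∈ IP`,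
`P' = P(A(P) \ {a}) ∈ IP` and `χ_{P''} ∣ χ_{P'}`. -/
inductive IsInductivePoset :
    ∀ (β : Type) (po : PartialOrder β) (fin : Fintype β) (bo : OrderBot β), Prop where
  | triv (β : Type) [po : PartialOrder β] [fin : Fintype β] [bo : OrderBot β]
      (h : ∀ x : β, x = ⊥) : IsInductivePoset β po fin bo
  | step (β : Type) [po : PartialOrder β] [fin : Fintype β] [bo : OrderBot β]
      (hLG : IsLocallyGeometric β) (a : β) (ha : a ∈ atoms β)
      (hres : IsInductivePoset {y : β // a ≤ y} inferInstance inferInstance inferInstance)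
      (hdel : IsInductivePoset {y : β // y ∈ genSub (atoms β \ {a})}
        inferInstance inferInstance inferInstance)
      (hdvd : charPoly {y : β // a ≤ y} ∣ charPoly {y : β // y ∈ genSub (atoms β \ {a})}) :
      IsInductivePoset β po fin bo

/-- The class of divisional posets: the smallest class of locally geometric
posets containing the one-element poset and closed under:
`P ∈ DP` whenever there is an atom `a` such that `P'' = P_{≥a} ∈ DP`
and `χ_{P''} ∣ χ_P`. -/
inductive IsDivisionalPoset :
    ∀ (β : Type) (po : PartialOrder β) (fin : Fintype β) (bo : OrderBot β), Prop where
  | triv (β : Type) [po : PartialOrder β] [fin : Fintype β] [bo : OrderBot β]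
      (h : ∀ x : β, x = ⊥) : IsDivisionalPoset β po fin bo
  | step (β : Type) [po : PartialOrder β] [fin : Fintype β] [bo : OrderBot β]
      (hLG : IsLocallyGeometric β) (a : β) (ha : a ∈ atoms β)
      (hres : IsDivisionalPoset {y : β // a ≤ y} inferInstance inferInstance inferInstance)
      (hdvd : charPoly {y : β // a ≤ y} ∣ charPoly β) :
      IsDivisionalPoset β po fin bo

/-- An element `m` of a (geometric) lattice is modular if
`m ∧ (y ∨ z) = (m ∧ y) ∨ z` for all `z ≤ m` and all `y`. Joins and meets are
expressed via `joinSet` and `meetSet`. -/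
def IsModular {β : Type*} [PartialOrder β] (m : β) : Prop :=
  ∀ z y j mj my r : β, z ≤ m →
    j ∈ joinSet {y, z} → mj ∈ meetSet {m, j} →
    my ∈ meetSet {m, y} → r ∈ joinSet {my, z} → mj = r

/-- `Q` is an M-ideal of the locally geometric poset `β`. -/
def IsMIdeal (β : Type*) [PartialOrder β] (Q : Set β) : Prop :=
  IsLowerSet Q ∧
  (∀ x y : β, Maximal (· ∈ Q) x → Maximal (· ∈ Q) y → rk x = rk y) ∧
  (∀ T ⊆ Q, joinSet T ⊆ Q) ∧
  (∀ y ∈ Q, ∀ a ∈ atoms β, a ∉ Q → (joinSet {a, y}).Nonempty) ∧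
  (∀ x : β, IsMax x → ∃ y, Maximal (· ∈ Q) y ∧
    ∃ h : y ≤ x, IsModular (⟨y, h⟩ : {u : β // u ≤ x}))

/-- `Q` is a TM-ideal of the locally geometric poset `β`: an M-ideal where
moreover `|a ∨ y| = 1` for `y ∈ Q` and atoms `a ∉ Q`. -/
def IsTMIdeal (β : Type*) [PartialOrder β] (Q : Set β) : Prop :=
  IsMIdeal β Q ∧ ∀ y ∈ Q, ∀ a ∈ atoms β, a ∉ Q → ∃! z, z ∈ joinSet {a, y}

/-- A locally geometric poset is supersolvable if it admits an M-chain
`{0̂} = Q_0 ⊊ Q_1 ⊊ ⋯ ⊊ Q_r = P` with each `Q_i` an M-ideal of `Q_{i+1}`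
and `rk(Q_i) = i`. -/
def IsSupersolvable (β : Type*) [PartialOrder β] [Fintype β] [OrderBot β] : Prop :=
  ∃ Q : Fin (prk β + 1) → Set β,
    Q 0 = {⊥} ∧ Q (Fin.last _) = Set.univ ∧
    (∀ i : Fin (prk β), Q i.castSucc ⊂ Q i.succ) ∧
    (∀ i : Fin (prk β + 1), prk {y : β // y ∈ Q i} = i) ∧
    ∀ i : Fin (prk β),
      IsMIdeal {y : β // y ∈ Q i.succ} {z : {y : β // y ∈ Q i.succ} | (z : β) ∈ Q i.castSucc}

/-- A locally geometric poset is strictly supersolvable if it admits a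
TM-chain as above, with each `Q_i` a TM-ideal of `Q_{i+1}`. -/
def IsStrictlySupersolvable (β : Type*) [PartialOrder β] [Fintype β] [OrderBot β] : Prop :=
  ∃ Q : Fin (prk β + 1) → Set β,
    Q 0 = {⊥} ∧ Q (Fin.last _) = Set.univ ∧
    (∀ i : Fin (prk β), Q i.castSucc ⊂ Q i.succ) ∧
    (∀ i : Fin (prk β + 1), prk {y : β // y ∈ Q i} = i) ∧
    ∀ i : Fin (prk β),
      IsTMIdeal {y : β // y ∈ Q i.succ} {z : {y : β // y ∈ Q i.succ} | (z : β) ∈ Q i.castSucc}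

end PosetArr

end

/-!
A crosscut-type expansion of `μ(0̂, x)` over sets of atoms turns `χ_P` into a signed sum, over
sets `S` of atoms, of `t^{rk P - rk x}` for the joins `x` of `S`; in a locally geometric poset a
set of atoms below `x` has a unique join below `x`, which is what makes the expansion work.
Splitting the sets according to whether they contain `a` yields the deletion–restriction
recursion `χ_P = t^{rk P - rk P'} χ_{P'} - t^{rk P - 1 - rk P''} χ_{P''}`: the sets avoiding `a`
are exactly the generating sets of `P'`, and the joins of the sets containing `a` are computed in
`P'' = P_{≥ a}`. Ranks in `P'` and `P''` are the ambient ones (shifted by one in `P''`), because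
every element of these subposets covers, in `P`, another element of the subposet. Given the
factorisations of `χ_{P'}` and `χ_{P''}`, whose degrees fix `rk P'` and `rk P''`, the recursion
factors `χ_P`, and `χ_{P''} ∣ χ_{P'}` is the addition step defining `IP`.
-/

namespace PosetArr

section Rank

variable {γ : Type*} [PartialOrder γ]

lemma rk_bot [OrderBot γ] : rk (⊥ : γ) = 0 := by
  simp [rk, Set.chainHeight_empty]

lemma ne_bot_of_mem_atoms [OrderBot γ] {b : γ} (hb : b ∈ atoms γ) : b ≠ ⊥ := by
  rintro rfl
  exact absurd hb (by simp [atoms, rk_bot])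

lemma rk_coe_Iic {x : γ} (ξ : {y : γ // y ≤ x}) : rk (ξ : γ) = rk ξ := by
  have himage : Subtype.val '' Set.Iio ξ = Set.Iio (ξ : γ) := by
    ext w
    exact ⟨by rintro ⟨η, hη, rfl⟩; exact hη, fun hw => ⟨⟨w, hw.le.trans ξ.2⟩, hw, rfl⟩⟩
  rw [rk, rk, ← himage]
  exact congrArg ENat.toNat (Set.chainHeight_eq_of_relEmbedding _ (Subtype.relEmbedding _ _))

lemma mem_atoms_Iic_iff {x : γ} (ξ : {y : γ // y ≤ x}) : ξ ∈ atoms _ ↔ (ξ : γ) ∈ atoms γ := by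
  simp [atoms, rk_coe_Iic]

lemma covBy_coe_Iic_iff {x : γ} {η ξ : {y : γ // y ≤ x}} : (η : γ) ⋖ ξ ↔ η ⋖ ξ :=
  Set.OrdConnected.apply_covBy_apply_iff (OrderEmbedding.subtype (· ≤ x))
    (by
      simp only [OrderEmbedding.coe_subtype, Subtype.range_coe_subtype]
      exact Set.ordConnected_Iic)

variable [Finite γ]

lemma rk_cast (x : γ) : (rk x : ℕ∞) = (Set.Iio x).chainHeight (· < ·) :=
  ENat.natCast_toNat (Set.chainHeight_ne_top_of_finite _ _ (Set.toFinite _))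

lemma encard_le_rk {x : γ} {t : Set γ} (ht : t ⊆ Set.Iio x) (hc : IsChain (· < ·) t) :
    t.encard ≤ rk x :=
  rk_cast x ▸ Set.encard_le_chainHeight_of_isChain _ _ ht hc

lemma exists_isChain_encard_eq_rk (x : γ) :
    ∃ t ⊆ Set.Iio x, t.encard = rk x ∧ IsChain (· < ·) t :=
  Set.exists_isChain_of_le_chainHeight _ (rk_cast x).le

lemma rk_lt_rk {z x : γ} (h : z < x) : rk z < rk x := by
  obtain ⟨t, htz, hte, htc⟩ := exists_isChain_encard_eq_rk z
  have hzt : z ∉ t := fun hz => lt_irrefl z (htz hz)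
  have hsub : insert z t ⊆ Set.Iio x :=
    Set.insert_subset h (htz.trans (Set.Iio_subset_Iio h.le))
  have hle := encard_le_rk hsub (htc.insert fun y hy _ => Or.inr (htz hy))
  rw [Set.encard_insert_of_notMem hzt, hte] at hle
  exact_mod_cast hle

lemma exists_lt_rk_eq_add_one {x y : γ} (h : y < x) : ∃ z < x, rk x = rk z + 1 := by
  obtain ⟨t, htx, hte, htc⟩ := exists_isChain_encard_eq_rk x
  have hne : t.Nonempty := by
    rw [← Set.encard_pos, hte]
    exact_mod_cast (Nat.zero_le _).trans_lt (rk_lt_rk h)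
  obtain ⟨z, hz⟩ := t.toFinite.exists_maximal hne
  have hsub : t \ {z} ⊆ Set.Iio z := by
    rintro w ⟨hw, hwz⟩
    rcases htc hw hz.1 hwz with hlt | hlt
    · exact hlt
    · exact absurd (hz.2 hw hlt.le) (not_le_of_gt hlt)
  have hle := encard_le_rk hsub (htc.mono Set.sdiff_subset)
  have hrk : ((rk x : ℕ) : ℕ∞) ≤ rk z + 1 := by
    rw [← hte, ← Set.encard_sdiff_singleton_add_one hz.1]
    gcongr
  refine ⟨z, htx hz.1, le_antisymm (by exact_mod_cast hrk) (rk_lt_rk (htx hz.1))⟩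

lemma eq_of_le_of_mem_atoms {a b : γ} (ha : a ∈ atoms γ) (hb : b ∈ atoms γ) (h : b ≤ a) :
    b = a := by
  refine h.eq_or_lt.resolve_right fun hlt => ?_
  have := rk_lt_rk hlt
  simp_all [atoms]

lemma exists_atom_le [OrderBot γ] {x : γ} (hx : x ≠ ⊥) : ∃ b ∈ atoms γ, b ≤ x := by
  obtain ⟨b, hb, hbx⟩ := exists_covBy_le_of_lt (bot_lt_iff_ne_bot.2 hx)
  obtain ⟨z, hzb, hrk⟩ := exists_lt_rk_eq_add_one hb.lt
  have hz : z = ⊥ := by_contra fun hz => hb.2 (bot_lt_iff_ne_bot.2 hz) hzb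
  exact ⟨b, by simp [atoms, hrk, hz, rk_bot], hbx⟩

lemma rk_coe_eq_rk_add (hr : IsRanked γ) {p : γ → Prop} [OrderBot (Subtype p)]
    (hcov : ∀ ξ : Subtype p, ξ ≠ ⊥ → ∃ η : Subtype p, (η : γ) ⋖ ξ) (ξ : Subtype p) :
    rk (ξ : γ) = rk ξ + rk ((⊥ : Subtype p) : γ) := by
  induction ξ using WellFoundedLT.induction with
  | _ ξ ih =>
    by_cases hξ : ξ = ⊥
    · subst hξ; simp [rk_bot]
    obtain ⟨η, hη⟩ := hcov ξ hξ
    obtain ⟨ζ, hζ, hrkξ⟩ := exists_lt_rk_eq_add_one (bot_lt_iff_ne_bot.2 hξ)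
    have hηξ : η < ξ := hη.lt
    have hrkη := ih η hηξ
    have hrkζ := ih ζ hζ
    have hcov := hr _ _ hη
    have hlt := rk_lt_rk hηξ
    have hlt' := rk_lt_rk (show (ζ : γ) < ξ from hζ)
    omega

end Rank

section Join

variable {α : Type*} [PartialOrder α]

lemma mem_joinSet_iff_minimal {S : Set α} {z : α} :
    z ∈ joinSet S ↔ Minimal (· ∈ upperBounds S) z :=
  ⟨fun h => ⟨h.1, fun _ hw hwz => (h.2 _ hw hwz).ge⟩,
    fun h => ⟨h.1, fun _ hw hwz => le_antisymm hwz (h.2 hw hwz)⟩⟩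

lemma eq_bot_of_mem_joinSet_empty [OrderBot α] {z : α} (hz : z ∈ joinSet ∅) : z = ⊥ :=
  (hz.2 ⊥ (by simp) bot_le).symm

lemma exists_mem_joinSet_le [Finite α] {S : Set α} {w : α} (hw : w ∈ upperBounds S) :
    ∃ z ∈ joinSet S, z ≤ w := by
  obtain ⟨z, hzw, hz⟩ := (upperBounds S).toFinite.exists_le_minimal hw
  exact ⟨z, mem_joinSet_iff_minimal.2 hz, hzw⟩

lemma mem_joinSet_pair_Iic_iff {x : α} {u v ζ : {y : α // y ≤ x}} :
    ζ ∈ joinSet {u, v} ↔ (ζ : α) ∈ joinSet {(u : α), (v : α)} := by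
  have hub : ∀ w : {y : α // y ≤ x},
      w ∈ upperBounds {u, v} ↔ (w : α) ∈ upperBounds {(u : α), (v : α)} := by
    simp [upperBounds_insert]
  constructor
  · rintro ⟨hζ, hmin⟩
    exact ⟨(hub ζ).1 hζ, fun w hw hwζ =>
      congrArg Subtype.val (hmin ⟨w, hwζ.trans ζ.2⟩ ((hub _).2 hw) hwζ)⟩
  · rintro ⟨hζ, hmin⟩
    exact ⟨(hub ζ).2 hζ, fun w hw hwζ => Subtype.ext (hmin w ((hub w).1 hw) hwζ)⟩

end Join

section Geometric

variable {α : Type*} [PartialOrder α]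

lemma exists_atom_le_not_le_of_covBy (hLG : IsLocallyGeometric α) {z y : α} (h : z ⋖ y) :
    ∃ b ∈ atoms α, b ≤ y ∧ ¬b ≤ z := by
  obtain ⟨β, hβ, hβz, -⟩ :=
    ((hLG.2 y).2 ⟨z, h.le⟩ ⟨y, le_rfl⟩).1 (covBy_coe_Iic_iff.1 h)
  exact ⟨β, (mem_atoms_Iic_iff β).1 hβ, β.2, hβz⟩

lemma covBy_of_mem_joinSet_pair (hLG : IsLocallyGeometric α) {z b y : α} (hb : b ∈ atoms α)
    (hbz : ¬b ≤ z) (hy : y ∈ joinSet {z, b}) : z ⋖ y := by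
  have hzy : z ≤ y := hy.1 (by simp)
  have hby : b ≤ y := hy.1 (by simp)
  exact covBy_coe_Iic_iff.2 (((hLG.2 y).2 ⟨z, hzy⟩ ⟨y, le_rfl⟩).2
    ⟨⟨b, hby⟩, (mem_atoms_Iic_iff _).2 hb, hbz, mem_joinSet_pair_Iic_iff.2 hy⟩)

variable [Finite α]

lemma le_of_mem_joinSet_pair (hLG : IsLocallyGeometric α) {u v z w x : α}
    (hz : z ∈ joinSet {u, v}) (hzx : z ≤ x) (hw : w ∈ upperBounds {u, v}) (hwx : w ≤ x) :
    z ≤ w := by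
  obtain ⟨m, hm, hmw⟩ := exists_mem_joinSet_le hw
  have hu : u ≤ x := (hz.1 (by simp)).trans hzx
  have hv : v ≤ x := (hz.1 (by simp)).trans hzx
  have hzm : (⟨z, hzx⟩ : {y // y ≤ x}) = ⟨m, hmw.trans hwx⟩ :=
    ((hLG.2 x).1 ⟨u, hu⟩ ⟨v, hv⟩).1.unique (mem_joinSet_pair_Iic_iff.2 hz)
      (mem_joinSet_pair_Iic_iff.2 hm)
  exact (congrArg Subtype.val hzm).trans_le hmw

/-- The minimal upper bound of a pair in the lattice `P_{≤ x}` is least (`le_of_mem_joinSet_pair`);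
adding the elements of `S` one at a time gives the claim. -/
lemma exists_isLeast_upperBounds_inter_Iic [OrderBot α] (hLG : IsLocallyGeometric α)
    {S : Set α} {x : α} (hx : x ∈ upperBounds S) :
    ∃ ℓ, IsLeast (upperBounds S ∩ Set.Iic x) ℓ := by
  revert hx
  induction S, S.toFinite using Set.Finite.induction_on with
  | empty => exact fun _ => ⟨⊥, ⟨by simp, bot_le⟩, fun _ _ => bot_le⟩
  | @insert c S _ _ ih =>
    intro hx
    rw [upperBounds_insert] at hx
    obtain ⟨ℓ, ⟨hℓ, hℓx⟩, hleast⟩ := ih hx.2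
    obtain ⟨m, hm, hmx⟩ := exists_mem_joinSet_le (S := {c, ℓ}) (by
      rw [upperBounds_insert, upperBounds_singleton]; exact ⟨hx.1, hℓx⟩)
    refine ⟨m, ⟨?_, hmx⟩, fun w ⟨hw, hwx⟩ => ?_⟩
    · rw [upperBounds_insert]
      exact ⟨hm.1 (by simp), fun s hs => (hℓ hs).trans (hm.1 (by simp))⟩
    · rw [upperBounds_insert] at hw
      exact le_of_mem_joinSet_pair hLG hm hmx (by simp [hw.1, hleast ⟨hw.2, hwx⟩]) hwx

lemma le_of_mem_joinSet [OrderBot α] (hLG : IsLocallyGeometric α) {S : Set α} {x z w : α}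
    (hz : z ∈ joinSet S) (hzx : z ≤ x) (hw : w ∈ upperBounds S) (hwx : w ≤ x) : z ≤ w := by
  obtain ⟨ℓ, hℓ, hleast⟩ :=
    exists_isLeast_upperBounds_inter_Iic hLG (S := S) fun _ hs => (hz.1 hs).trans hzx
  obtain rfl : ℓ = z := hz.2 ℓ hℓ.1 (hleast ⟨hz.1, hzx⟩)
  exact hleast ⟨hw, hwx⟩

lemma existsUnique_le_mem_joinSet [OrderBot α] (hLG : IsLocallyGeometric α) {S : Set α}
    {x : α} (hx : x ∈ upperBounds S) : ∃! z, z ≤ x ∧ z ∈ joinSet S := by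
  obtain ⟨z, hz, hzx⟩ := exists_mem_joinSet_le hx
  refine ⟨z, ⟨hzx, hz⟩, fun y ⟨hyx, hy⟩ => le_antisymm ?_ ?_⟩
  · exact le_of_mem_joinSet hLG hy hyx hz.1 hzx
  · exact le_of_mem_joinSet hLG hz hzx hy.1 hyx

end Geometric

section Subposets

variable {α : Type*} [PartialOrder α]

lemma mem_genSub_of_mem_joinSet [OrderBot α] {B T : Set α} (hT : T ⊆ B) {z : α}
    (hz : z ∈ joinSet T) : z ∈ genSub B :=
  Or.inr ⟨T, hT, hz⟩

variable [Finite α]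

lemma rk_coe_Ici (hr : IsRanked α) {a : α} (ξ : {y : α // a ≤ y}) : rk (ξ : α) = rk ξ + rk a :=
  rk_coe_eq_rk_add hr (fun ξ hξ => by
    have haξ : a < ξ := lt_of_le_of_ne ξ.2 fun h => hξ (Subtype.ext h.symm)
    obtain ⟨η, haη, hηξ⟩ := exists_le_covBy_of_lt haξ
    exact ⟨⟨η, haη⟩, hηξ⟩) ξ

variable [OrderBot α]

/-- Writing `ξ` as the join of an inclusion-minimal set `T` of generators and dropping one
`b ∈ T`, the join of the rest is covered by `ξ = z ∨ b`. -/
lemma exists_covBy_genSub (hLG : IsLocallyGeometric α) {B : Set α} (hB : B ⊆ atoms α)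
    (ξ : {y : α // y ∈ genSub B}) (hξ : ξ ≠ ⊥) :
    ∃ η : {y : α // y ∈ genSub B}, (η : α) ⋖ ξ := by
  obtain hbot | ⟨T₀, hT₀B, hT₀⟩ := ξ.2
  · exact absurd (Subtype.ext hbot) hξ
  obtain ⟨T, ⟨hTB, hT⟩, hTmin⟩ :=
    (Set.toFinite {T : Set α | T ⊆ B ∧ (ξ : α) ∈ joinSet T}).exists_minimal ⟨T₀, hT₀B, hT₀⟩
  obtain ⟨b, hbT⟩ : T.Nonempty := by
    rw [Set.nonempty_iff_ne_empty]
    rintro rfl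
    exact hξ (Subtype.ext (eq_bot_of_mem_joinSet_empty hT))
  obtain ⟨z, hz, hzξ⟩ := exists_mem_joinSet_le (S := T \ {b}) fun _ hs => hT.1 hs.1
  have hub : ∀ w, z ≤ w → b ≤ w → w ∈ upperBounds T := fun w hzw hbw s hs =>
    if h : s = b then h ▸ hbw else (hz.1 ⟨hs, h⟩).trans hzw
  have hbz : ¬b ≤ z := by
    intro hbz
    have hzξ' : z = ξ := hT.2 z (hub z le_rfl hbz) hzξ
    have hsub := hTmin ⟨Set.sdiff_subset.trans hTB, hzξ' ▸ hz⟩ Set.sdiff_subset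
    exact (hsub hbT).2 rfl
  have hξzb : (ξ : α) ∈ joinSet {z, b} :=
    ⟨by simp [hzξ, hT.1 hbT], fun w hw hwξ =>
      hT.2 w (hub w (hw (by simp)) (hw (by simp))) hwξ⟩
  exact ⟨⟨z, mem_genSub_of_mem_joinSet (Set.sdiff_subset.trans hTB) hz⟩,
    covBy_of_mem_joinSet_pair hLG (hB (hTB hbT)) hbz hξzb⟩

lemma rk_coe_genSub (hLG : IsLocallyGeometric α) {B : Set α} (hB : B ⊆ atoms α)
    (ξ : {y : α // y ∈ genSub B}) : rk (ξ : α) = rk ξ := by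
  simpa [show ((⊥ : {y : α // y ∈ genSub B}) : α) = ⊥ from rfl, rk_bot] using
    rk_coe_eq_rk_add hLG.1 (exists_covBy_genSub hLG hB) ξ

end Subposets

section Mobius

variable {γ : Type*} [PartialOrder γ] [Fintype γ]

lemma mob_self (x : γ) : mob x x = 1 := by
  rw [mob]; simp

lemma sum_filter_le_eq_add (f : γ → ℤ) (x : γ) :
    ∑ y with y ≤ x, f y = f x + ∑ y with y < x, f y := by
  rw [← Finset.add_sum_erase _ _ (by simp : x ∈ Finset.univ.filter (· ≤ x))]
  congr 2
  ext y
  simp [lt_iff_le_and_ne, and_comm]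

variable [OrderBot γ]

lemma mob_bot_of_ne_bot {x : γ} (hx : x ≠ ⊥) :
    mob (⊥ : γ) x = -∑ y with y < x, mob ⊥ y := by
  rw [mob, if_neg (Ne.symm hx), if_pos (bot_lt_iff_ne_bot.2 hx),
    Finset.sum_attach _ (mob ⊥)]
  simp

lemma sum_mob_bot_le (x : γ) : ∑ y with y ≤ x, mob (⊥ : γ) y = if x = ⊥ then 1 else 0 := by
  rw [sum_filter_le_eq_add]
  split_ifs with hx
  · subst hx
    simp [mob_self]
  · rw [mob_bot_of_ne_bot hx]
    ring

lemma eq_mob_bot_of_sum_le (F : γ → ℤ)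
    (hF : ∀ x, ∑ y with y ≤ x, F y = if x = ⊥ then 1 else 0) (x : γ) : F x = mob ⊥ x := by
  induction x using WellFoundedLT.induction with
  | _ x ih =>
    have h := (hF x).trans (sum_mob_bot_le x).symm
    rw [sum_filter_le_eq_add, sum_filter_le_eq_add,
      Finset.sum_congr rfl fun y hy => ih y (Finset.mem_filter.1 hy).2] at h
    exact add_right_cancel h

/-- A crosscut-type formula. Summed over `[0̂, x]`, the right-hand side counts for each `S` the
unique `J S`-element below `x`, so it collapses to `∑_{S ⊆ {i ∈ I | R i x}} (-1)^|S|`, which is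
`1` exactly when `x = 0̂`. -/
theorem mob_bot_eq_sum_powerset {ι : Type*} (I : Finset ι) (R : ι → γ → Prop)
    (J : Finset ι → γ → Prop)
    (hJ : ∀ S ⊆ I, ∀ x, (∀ i ∈ S, R i x) → ∃! y, y ≤ x ∧ J S y)
    (hR : ∀ S ⊆ I, ∀ x y, y ≤ x → J S y → ∀ i ∈ S, R i x)
    (hbot : ∀ x, (∀ i ∈ I, ¬R i x) ↔ x = ⊥) (x : γ) :
    mob ⊥ x = ∑ S ∈ I.powerset, (-1) ^ S.card * if J S x then 1 else 0 := by
  refine (eq_mob_bot_of_sum_le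
    (fun x => ∑ S ∈ I.powerset, (-1) ^ S.card * if J S x then 1 else 0) (fun x => ?_) x).symm
  have hcard : ∀ S ∈ I.powerset, ∑ y with y ≤ x, (if J S y then (1 : ℤ) else 0)
      = if S ⊆ I.filter (R · x) then 1 else 0 := by
    intro S hS
    rw [Finset.mem_powerset] at hS
    rw [Finset.sum_boole, Finset.filter_filter]
    split_ifs with hSx
    · obtain ⟨y, hy, hyu⟩ := hJ S hS x fun i hi => (Finset.mem_filter.1 (hSx hi)).2
      rw [Nat.cast_eq_one, Finset.card_eq_one]
      exact ⟨y, Finset.eq_singleton_iff_unique_mem.2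
        ⟨by simpa using hy, fun z hz => hyu z (by simpa using hz)⟩⟩
    · simp only [Nat.cast_eq_zero, Finset.card_eq_zero, Finset.filter_eq_empty_iff]
      rintro y - ⟨hyx, hy⟩
      exact hSx fun i hi => Finset.mem_filter.2 ⟨hS hi, hR S hS x y hyx hy i hi⟩
  calc ∑ y with y ≤ x, ∑ S ∈ I.powerset, (-1) ^ S.card * (if J S y then 1 else 0)
      = ∑ S ∈ I.powerset, (-1) ^ S.card * if S ⊆ I.filter (R · x) then 1 else 0 := by
        rw [Finset.sum_comm]
        exact Finset.sum_congr rfl fun S hS => by rw [← Finset.mul_sum, hcard S hS]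
    _ = ∑ S ∈ (I.filter (R · x)).powerset, (-1) ^ S.card := by
        simp only [mul_ite, mul_one, mul_zero]
        rw [← Finset.sum_filter]
        congr 1
        ext S
        simp only [Finset.mem_filter, Finset.mem_powerset]
        exact ⟨fun h => h.2, fun h => ⟨h.trans (Finset.filter_subset _ _), h⟩⟩
    _ = if x = ⊥ then 1 else 0 := by
        rw [Finset.sum_powerset_neg_one_pow_card]
        exact if_congr (Finset.filter_eq_empty_iff.trans (hbot x)) rfl rfl

end Mobius

section CharPoly

variable {γ : Type*} [PartialOrder γ] [Fintype γ]

lemma rk_le_prk (x : γ) : rk x ≤ prk γ :=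
  Finset.le_sup (Finset.mem_univ x)

variable [OrderBot γ]

lemma natDegree_charPoly : (charPoly γ).natDegree = prk γ := by
  refine natDegree_eq_of_le_of_coeff_ne_zero
    (natDegree_sum_le_of_forall_le _ _ fun x _ => natDegree_C_mul_X_pow_le _ _ |>.trans
      (Nat.sub_le _ _)) ?_
  rw [charPoly, finsetSum_coeff, Finset.sum_eq_single ⊥]
  · simp [rk_bot, mob_self]
  · intro x _ hx
    have := rk_lt_rk (bot_lt_iff_ne_bot.2 hx)
    rw [coeff_C_mul_X_pow, if_neg (by rw [rk_bot] at this; have := rk_le_prk x; omega)]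
  · simp

lemma prk_eq_card_of_charPoly_eq {E : Multiset ℤ}
    (h : charPoly γ = (E.map fun e => X - C e).prod) : prk γ = Multiset.card E := by
  rw [← natDegree_charPoly, h, natDegree_multiset_prod_X_sub_C_eq_card]

theorem charPoly_eq_sum_powerset {ι : Type*} (I : Finset ι) (R : ι → γ → Prop)
    (J : Finset ι → γ → Prop)
    (hJ : ∀ S ⊆ I, ∀ x, (∀ i ∈ S, R i x) → ∃! y, y ≤ x ∧ J S y)
    (hR : ∀ S ⊆ I, ∀ x y, y ≤ x → J S y → ∀ i ∈ S, R i x)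
    (hbot : ∀ x, (∀ i ∈ I, ¬R i x) ↔ x = ⊥) :
    charPoly γ = ∑ S ∈ I.powerset, (-1) ^ S.card * ∑ x with J S x, X ^ (prk γ - rk x) := by
  simp_rw [charPoly, mob_bot_eq_sum_powerset I R J hJ hR hbot, map_sum, Finset.sum_mul,
    Finset.sum_filter, Finset.mul_sum]
  rw [Finset.sum_comm]
  refine Finset.sum_congr rfl fun S _ => Finset.sum_congr rfl fun x _ => ?_
  split_ifs <;> simp

end CharPoly

section Shift

variable {α : Type*} [PartialOrder α] [Fintype α] {p : α → Prop} [Nonempty (Subtype p)] {k : ℕ}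

lemma prk_add_le_of_rk_coe (hrk : ∀ ξ : Subtype p, rk (ξ : α) = rk ξ + k) :
    prk (Subtype p) + k ≤ prk α := by
  obtain ⟨ξ, -, hξ⟩ := Finset.exists_mem_eq_sup Finset.univ Finset.univ_nonempty
    (rk (α := Subtype p))
  rw [prk, hξ, ← hrk]
  exact rk_le_prk _

lemma sum_X_pow_rk_eq_X_pow_mul (hrk : ∀ ξ : Subtype p, rk (ξ : α) = rk ξ + k)
    {J : α → Prop} (hJ : ∀ x, J x → p x) :
    ∑ x with J x, (X : ℤ[X]) ^ (prk α - rk x)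
      = X ^ (prk α - k - prk (Subtype p)) * ∑ ξ : Subtype p with J ξ.val,
          X ^ (prk (Subtype p) - rk ξ) := by
  have hle := prk_add_le_of_rk_coe hrk
  have hmap : (Finset.univ.filter fun ξ : Subtype p => J ξ.val).map (Function.Embedding.subtype p)
      = Finset.univ.filter J := by
    ext x
    simpa using fun hx => hJ x hx
  rw [← hmap, Finset.sum_map, Finset.mul_sum]
  refine Finset.sum_congr rfl fun ξ _ => ?_
  have := rk_le_prk ξ
  rw [Function.Embedding.coe_subtype, hrk, ← pow_add]
  congr 1
  omega

end Shift

section DeletionRestriction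

variable {α : Type*} [PartialOrder α]

lemma existsUnique_subtype_le {p P : α → Prop} (hP : ∀ y, P y → p y) {ξ : Subtype p}
    (h : ∃! y, y ≤ (ξ : α) ∧ P y) : ∃! η : Subtype p, η ≤ ξ ∧ P η :=
  let ⟨y, ⟨hyξ, hy⟩, hu⟩ := h
  ⟨⟨y, hP y hy⟩, ⟨hyξ, hy⟩, fun η hη => Subtype.ext (hu η hη)⟩

variable [Fintype α] [OrderBot α]

lemma charPoly_eq_sum_powerset_atoms (hLG : IsLocallyGeometric α) :
    charPoly α = ∑ S ∈ (atoms α).toFinset.powerset,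
      (-1) ^ S.card * ∑ x with x ∈ joinSet (S : Set α), X ^ (prk α - rk x) := by
  refine charPoly_eq_sum_powerset _ (fun b x => b ≤ x)
    (fun (S : Finset α) x => x ∈ joinSet (S : Set α))
    (fun S _ x hSx => existsUnique_le_mem_joinSet hLG hSx)
    (fun S _ x y hyx hy b hb => (hy.1 hb).trans hyx) fun x => ⟨fun h => ?_, ?_⟩
  · by_contra hx
    obtain ⟨b, hb, hbx⟩ := exists_atom_le hx
    exact h b (Set.mem_toFinset.2 hb) hbx
  · rintro rfl b hb hbb
    exact ne_bot_of_mem_atoms (Set.mem_toFinset.1 hb) (le_bot_iff.1 hbb)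

lemma charPoly_genSub_eq (hLG : IsLocallyGeometric α) {B : Set α} (hB : B ⊆ atoms α) :
    charPoly {y : α // y ∈ genSub B} = ∑ S ∈ B.toFinset.powerset, (-1) ^ S.card *
      ∑ ξ : {y : α // y ∈ genSub B} with ξ.val ∈ joinSet (S : Set α),
        X ^ (prk {y : α // y ∈ genSub B} - rk ξ) := by
  refine charPoly_eq_sum_powerset (γ := {y : α // y ∈ genSub B}) _ (fun b ξ => b ≤ ξ.val)
    (fun (S : Finset α) ξ => ξ.val ∈ joinSet (S : Set α))
    (fun S hS ξ hSξ => existsUnique_subtype_le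
      (fun y hy => mem_genSub_of_mem_joinSet (by simpa using hS) hy)
      (existsUnique_le_mem_joinSet hLG hSξ))
    (fun S _ ξ η hηξ hη b hb => (hη.1 hb).trans hηξ) fun ξ => ⟨fun h => ?_, ?_⟩
  · by_contra hξ
    obtain hbot | ⟨T, hTB, hT⟩ := ξ.2
    · exact hξ (Subtype.ext hbot)
    obtain ⟨b, hbT⟩ : T.Nonempty := by
      rw [Set.nonempty_iff_ne_empty]
      rintro rfl
      exact hξ (Subtype.ext (eq_bot_of_mem_joinSet_empty hT))
    exact h b (Set.mem_toFinset.2 (hTB hbT)) (hT.1 hbT)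
  · rintro rfl b hb hbb
    exact ne_bot_of_mem_atoms (hB (Set.mem_toFinset.1 hb)) (le_bot_iff.1 hbb)

lemma charPoly_Ici_eq (hLG : IsLocallyGeometric α) {a : α} (ha : a ∈ atoms α) :
    charPoly {y : α // a ≤ y} = ∑ S ∈ (atoms α \ {a}).toFinset.powerset, (-1) ^ S.card *
      ∑ ξ : {y : α // a ≤ y} with ξ.val ∈ joinSet (↑(insert a S) : Set α),
        X ^ (prk {y : α // a ≤ y} - rk ξ) := by
  refine charPoly_eq_sum_powerset (γ := {y : α // a ≤ y}) _ (fun b ξ => b ≤ ξ.val)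
    (fun (S : Finset α) ξ => ξ.val ∈ joinSet (↑(insert a S) : Set α))
    (fun S _ ξ hSξ => existsUnique_subtype_le (fun y hy => hy.1 (by simp))
      (existsUnique_le_mem_joinSet hLG (by simpa [upperBounds_insert] using ⟨ξ.2, hSξ⟩)))
    (fun S _ ξ η hηξ hη b hb => (hη.1 (by simp [hb])).trans hηξ) fun ξ => ⟨fun h => ?_, ?_⟩
  · by_contra hξ
    have haξ : a < ξ.val := lt_of_le_of_ne ξ.2 fun h => hξ (Subtype.ext h.symm)
    obtain ⟨z, haz, hzξ⟩ := exists_covBy_le_of_lt haξ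
    obtain ⟨b, hb, hbz, hba⟩ := exists_atom_le_not_le_of_covBy hLG haz
    exact h b (by simpa [hb] using fun h => hba h.le) (hbz.trans hzξ)
  · rintro rfl b hb hba
    rw [Set.mem_toFinset] at hb
    exact hb.2 (eq_of_le_of_mem_atoms ha hb.1 hba)

theorem charPoly_eq_deletion_sub_restriction (hLG : IsLocallyGeometric α) {a : α}
    (ha : a ∈ atoms α) :
    charPoly α =
      X ^ (prk α - prk {y : α // y ∈ genSub (atoms α \ {a})})
          * charPoly {y : α // y ∈ genSub (atoms α \ {a})}
        - X ^ (prk α - 1 - prk {y : α // a ≤ y}) * charPoly {y : α // a ≤ y} := by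
  have hA : (atoms α).toFinset = insert a (atoms α \ {a}).toFinset := by
    ext b
    by_cases hb : b = a <;> simp [hb, ha]
  have hdel (ξ : {y : α // y ∈ genSub (atoms α \ {a})}) : rk ξ.val = rk ξ + 0 :=
    rk_coe_genSub hLG Set.sdiff_subset ξ
  have hres (ξ : {y : α // a ≤ y}) : rk ξ.val = rk ξ + 1 := by
    rw [rk_coe_Ici hLG.1 ξ, show rk a = 1 from ha]
  rw [charPoly_eq_sum_powerset_atoms hLG, hA, Finset.sum_powerset_insert (by simp),
    charPoly_genSub_eq hLG Set.sdiff_subset, charPoly_Ici_eq hLG ha, Finset.mul_sum,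
    Finset.mul_sum, sub_eq_add_neg, ← Finset.sum_neg_distrib]
  refine congrArg₂ (· + ·) (Finset.sum_congr (by congr!) fun S hS => ?_)
    (Finset.sum_congr (by congr!) fun S hS => ?_)
  · have hS : ↑S ⊆ atoms α \ {a} := fun x hx => by simpa using Finset.mem_powerset.1 hS hx
    rw [sum_X_pow_rk_eq_X_pow_mul hdel fun x hx => mem_genSub_of_mem_joinSet hS hx, Nat.sub_zero]
    ring
  · have haS : a ∉ S := fun h => by simpa using Finset.mem_powerset.1 hS h
    rw [Finset.card_insert_of_notMem haS,
      sum_X_pow_rk_eq_X_pow_mul hres fun x hx => hx.1 (by simp)]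
    ring

end DeletionRestriction

open Polynomial in
theorem inductive_addition_general (α : Type) [po : PartialOrder α] [fin : Fintype α]
    [bo : OrderBot α] (hLG : IsLocallyGeometric α)
    (a : α) (ha : a ∈ atoms α)
    (E : Multiset ℤ) (d : ℤ) :
    -- (a) `a` is not a separator
    ((prk α = prk {y : α // y ∈ genSub (atoms α \ {a})} →
      IsInductivePoset {y : α // a ≤ y} inferInstance inferInstance inferInstance →
      charPoly {y : α // a ≤ y} = (E.map fun e => X - C e).prod →
      IsInductivePoset {y : α // y ∈ genSub (atoms α \ {a})}
        inferInstance inferInstance inferInstance →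
      charPoly {y : α // y ∈ genSub (atoms α \ {a})} = ((d ::ₘ E).map fun e => X - C e).prod →
      IsInductivePoset α po fin bo ∧
        charPoly α = (((d + 1) ::ₘ E).map fun e => X - C e).prod)) ∧
    -- (b) `a` is a separator
    (prk α = prk {y : α // y ∈ genSub (atoms α \ {a})} + 1 →
      IsInductivePoset {y : α // a ≤ y} inferInstance inferInstance inferInstance →
      IsInductivePoset {y : α // y ∈ genSub (atoms α \ {a})}
        inferInstance inferInstance inferInstance →
      charPoly {y : α // a ≤ y} = (E.map fun e => X - C e).prod →
      charPoly {y : α // y ∈ genSub (atoms α \ {a})} = (E.map fun e => X - C e).prod →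
      IsInductivePoset α po fin bo ∧
        charPoly α = (((1 : ℤ) ::ₘ E).map fun e => X - C e).prod) := by
  have hχ := charPoly_eq_deletion_sub_restriction hLG ha
  refine ⟨fun hprk hIP'' hχ'' hIP' hχ' => ?_, fun hprk hIP'' hIP' hχ'' hχ' => ?_⟩
  · have hr'' := prk_eq_card_of_charPoly_eq hχ''
    have hr' := prk_eq_card_of_charPoly_eq hχ'
    rw [Multiset.card_cons] at hr'
    refine ⟨.step α hLG a ha hIP'' hIP' ?_, ?_⟩
    · rw [hχ', hχ'', Multiset.map_cons, Multiset.prod_cons]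
      exact dvd_mul_left _ _
    · rw [hχ, hχ', hχ'', show prk α - prk {y : α // y ∈ genSub (atoms α \ {a})} = 0 by omega,
        show prk α - 1 - prk {y : α // a ≤ y} = 0 by omega]
      simp only [Multiset.map_cons, Multiset.prod_cons, map_add, map_one]
      ring
  · have hr'' := prk_eq_card_of_charPoly_eq hχ''
    have hr' := prk_eq_card_of_charPoly_eq hχ'
    refine ⟨.step α hLG a ha hIP'' hIP' (by rw [hχ', hχ'']), ?_⟩
    rw [hχ, hχ', hχ'', show prk α - prk {y : α // y ∈ genSub (atoms α \ {a})} = 1 by omega,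
      show prk α - 1 - prk {y : α // a ≤ y} = 0 by omega]
    simp only [Multiset.map_cons, Multiset.prod_cons, map_one]
    ring

open Polynomial in
/-- Addition theorem for inductive posets. -/
theorem inductive_addition (α : Type) [po : PartialOrder α] [fin : Fintype α]
    [bo : OrderBot α] (hLG : IsLocallyGeometric α)
    (hA : (atoms α).Nonempty) (a : α) (ha : a ∈ atoms α)
    (E : Multiset ℤ) (hE : ∀ e ∈ E, 0 < e) (d : ℤ) (hd : 0 < d) :
    -- (a) `a` is not a separator
    ((prk α = prk {y : α // y ∈ genSub (atoms α \ {a})} →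
      IsInductivePoset {y : α // a ≤ y} inferInstance inferInstance inferInstance →
      charPoly {y : α // a ≤ y} = (E.map fun e => X - C e).prod →
      IsInductivePoset {y : α // y ∈ genSub (atoms α \ {a})}
        inferInstance inferInstance inferInstance →
      charPoly {y : α // y ∈ genSub (atoms α \ {a})} = ((d ::ₘ E).map fun e => X - C e).prod →
      IsInductivePoset α po fin bo ∧
        charPoly α = (((d + 1) ::ₘ E).map fun e => X - C e).prod)) ∧
    -- (b) `a` is a separator
    (prk α = prk {y : α // y ∈ genSub (atoms α \ {a})} + 1 →
      IsInductivePoset {y : α // a ≤ y} inferInstance inferInstance inferInstance →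
      IsInductivePoset {y : α // y ∈ genSub (atoms α \ {a})}
        inferInstance inferInstance inferInstance →
      charPoly {y : α // a ≤ y} = (E.map fun e => X - C e).prod →
      charPoly {y : α // y ∈ genSub (atoms α \ {a})} = (E.map fun e => X - C e).prod →
      IsInductivePoset α po fin bo ∧
        charPoly α = (((1 : ℤ) ::ₘ E).map fun e => X - C e).prod) :=
  inductive_addition_general α (po := po) (fin := fin) (bo := bo) hLG a ha E d

end PosetArr
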